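/- Let 1 < p < ∞, let φ be a non-negative function with φ ∈ L^1(0,∞), and assume A_inf > 0. If there is a constant N ≥ 0 such that ‖H_{α,β,φ} f‖_{L^p(ℝ,A_{α,β})} ≤ N · ‖f‖_{L^p(ℝ,A_{α,β})} for every f ∈ L^p(ℝ, A_{α,β}), then N ≥ A_inf. -/

import Mathlib

open MeasureTheory Set ENNReal

/-- The weight `A_{α,β}(x) = (sinh|x|)^{2α+1} (cosh|x|)^{2β+1}`. -/
noncomputable def Aw (α β : ℝ) (x : ℝ) : ℝ :=
  Real.sinh |x| ^ (2 * α + 1) * Real.cosh |x| ^ (2 * β + 1)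

/-- The Hausdorff operator associated with the Opdam–Cherednik transform. -/
noncomputable def Hop (α β : ℝ) (φ f : ℝ → ℝ) (x : ℝ) : ℝ :=
  ∫ t in Set.Ioi (0 : ℝ), (φ t / t) * f (x / t) * (Aw α β (x / t) / Aw α β x)

/-- The `L^p(I, A_{α,β})` norm, as an extended nonnegative real. -/
noncomputable def lpN (α β p : ℝ) (I : Set ℝ) (f : ℝ → ℝ) : ℝ≥0∞ :=
  (∫⁻ x in I, ENNReal.ofReal (|f x| ^ p * Aw α β x)) ^ (1 / p)

/-! The test functions `f_M = 1_{[1,M]} · (x A(x))^{-1/p}` satisfy `|f_M|^p A = 1/x` on `[1, M]`,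
so `‖f_M‖^p = log M`. Let `J(δ, R)` be the integral of the integrand of `A_inf` over `(δ, R]`.
For `x ∈ [R, M δ]` and `t ∈ (δ, R]` we have `x / t ∈ [1, M]`, and bounding
`A(x/t) / A(x)` from below by the infimum in `A_inf` gives `H f_M (x) ≥ J(δ, R) (x A(x))^{-1/p}`.
Integrating over `[R, M δ]` yields `J^p log (M δ / R) ≤ N^p log M`; letting `M → ∞` gives
`J(δ, R) ≤ N`, and `δ → 0`, `R → ∞` gives `A_inf ≤ N`. -/

lemma lintegral_Icc_ofReal_inv {a b : ℝ} (ha : 0 < a) (hab : a ≤ b) :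
    ∫⁻ x in Icc a b, ENNReal.ofReal x⁻¹ = ENNReal.ofReal (Real.log (b / a)) := by
  have hb : 0 < b := ha.trans_le hab
  rw [← ofReal_integral_eq_lintegral_ofReal, integral_Icc_eq_integral_Ioc,
    ← intervalIntegral.integral_of_le hab, integral_inv_of_pos ha hb]
  · exact (continuousOn_inv₀.mono fun x hx => (ha.trans_le hx.1).ne').integrableOn_Icc
  · exact (ae_restrict_iff' measurableSet_Icc).2
      (Filter.Eventually.of_forall fun x hx => inv_nonneg.2 (ha.le.trans hx.1))

lemma ENNReal.le_of_forall_mul_ofReal_sub_le {a b : ℝ≥0∞} (hb : b ≠ ⊤) {c : ℝ} (hc : 0 ≤ c)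
    (h : ∀ L, c < L → a * ENNReal.ofReal (L - c) ≤ b * ENNReal.ofReal L) : a ≤ b := by
  have ha : a ≠ ⊤ := by
    rintro rfl
    have := h (c + 1) (by linarith)
    rw [add_sub_cancel_left, ENNReal.ofReal_one, mul_one, top_le_iff] at this
    exact ENNReal.mul_ne_top hb ENNReal.ofReal_ne_top this
  rw [← ENNReal.ofReal_toReal ha, ← ENNReal.ofReal_toReal hb]
  refine ENNReal.ofReal_le_ofReal (le_of_not_gt fun hlt => ?_)
  set a' := a.toReal
  set b' := b.toReal
  set L := c + (a' * c + 1) / (a' - b')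
  have hab : 0 < a' - b' := sub_pos.2 hlt
  have hL : c < L := lt_add_of_pos_right c (by positivity)
  have hineq := h L hL
  rw [← ENNReal.ofReal_toReal ha, ← ENNReal.ofReal_toReal hb,
    ← ENNReal.ofReal_mul ENNReal.toReal_nonneg, ← ENNReal.ofReal_mul ENNReal.toReal_nonneg,
    ENNReal.ofReal_le_ofReal_iff (mul_nonneg ENNReal.toReal_nonneg (by linarith))] at hineq
  have hkey : (a' - b') * L = (a' - b') * c + (a' * c + 1) := by
    simp only [L]; field_simp
  nlinarith [mul_nonneg hab.le hc]

lemma setLIntegral_Ioi_le_of_forall_Ioc {g : ℝ → ℝ≥0∞} {C : ℝ≥0∞}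
    (h : ∀ δ R, 0 < δ → δ ≤ R → ∫⁻ t in Ioc δ R, g t ≤ C) : ∫⁻ t in Ioi 0, g t ≤ C := by
  set s : ℕ → Set ℝ := fun n => Ioc ((n + 1 : ℝ)⁻¹) (n + 1)
  have hs : Monotone s := fun m n hmn => Ioc_subset_Ioc
    (inv_anti₀ (by positivity) (by gcongr)) (by gcongr)
  have hunion : ⋃ n, s n = Ioi 0 := by
    refine Subset.antisymm (iUnion_subset fun n => Ioc_subset_Ioi_self.trans
      (Ioi_subset_Ioi (by positivity))) fun t ht => ?_
    obtain ⟨n, hn⟩ := exists_nat_gt (max t t⁻¹)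
    refine mem_iUnion.2 ⟨n, (inv_lt_comm₀ (by positivity) ht).2 ?_, ?_⟩ <;>
      linarith [le_max_left t t⁻¹, le_max_right t t⁻¹]
  rw [← hunion, setLIntegral_iUnion_of_directed _ hs.directed_le]
  refine iSup_le fun n => h _ _ (by positivity) ?_
  calc ((n + 1 : ℝ))⁻¹ ≤ 1 := inv_le_one_of_one_le₀ (by linarith [n.cast_nonneg (α := ℝ)])
    _ ≤ n + 1 := by linarith [n.cast_nonneg (α := ℝ)]

section Weight

variable {α β : ℝ}

lemma Aw_nonneg (x : ℝ) : 0 ≤ Aw α β x :=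
  mul_nonneg (Real.rpow_nonneg (Real.sinh_nonneg_iff.2 (abs_nonneg x)) _)
    (Real.rpow_nonneg (Real.cosh_pos _).le _)

lemma Aw_pos {x : ℝ} (hx : x ≠ 0) : 0 < Aw α β x :=
  mul_pos (Real.rpow_pos_of_pos (Real.sinh_pos_iff.2 (abs_pos.2 hx)) _)
    (Real.rpow_pos_of_pos (Real.cosh_pos _) _)

lemma measurable_Aw : Measurable (Aw α β) := by
  unfold Aw; fun_prop

lemma continuousAt_Aw {x : ℝ} (hx : x ≠ 0) : ContinuousAt (Aw α β) x :=
  ((Real.continuous_sinh.comp continuous_abs).continuousAt.rpow_const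
      (Or.inl (Real.sinh_pos_iff.2 (abs_pos.2 hx)).ne')).mul
    ((Real.continuous_cosh.comp continuous_abs).continuousAt.rpow_const
      (Or.inl (Real.cosh_pos _).ne'))

end Weight

lemma lpN_rpow {α β p : ℝ} (hp : p ≠ 0) (I : Set ℝ) (f : ℝ → ℝ) :
    lpN α β p I f ^ p = ∫⁻ x in I, ENNReal.ofReal (|f x| ^ p * Aw α β x) := by
  rw [lpN, ← ENNReal.rpow_mul, one_div_mul_cancel hp, ENNReal.rpow_one]

noncomputable def ratioInf (α β t : ℝ) : ℝ :=
  ⨅ u : {u : ℝ // u ≠ 0}, Aw α β u.1 / Aw α β (t * u.1)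

noncomputable def ainfDensity (α β p : ℝ) (φ : ℝ → ℝ) (t : ℝ) : ℝ :=
  φ t / t * t ^ (1/p) * ratioInf α β t ^ (1 - 1/p)

noncomputable def borderline (α β p y : ℝ) : ℝ :=
  (y * Aw α β y) ^ (-(1/p))

section Profile

variable {α β p : ℝ}

lemma ratioInf_nonneg (t : ℝ) : 0 ≤ ratioInf α β t :=
  Real.iInf_nonneg fun _ => div_nonneg (Aw_nonneg _) (Aw_nonneg _)

lemma ratioInf_le (t : ℝ) {u : ℝ} (hu : u ≠ 0) :
    ratioInf α β t ≤ Aw α β u / Aw α β (t * u) :=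
  ciInf_le ⟨0, by rintro _ ⟨v, rfl⟩; exact div_nonneg (Aw_nonneg _) (Aw_nonneg _)⟩
    (⟨u, hu⟩ : {u : ℝ // u ≠ 0})

lemma ainfDensity_nonneg {φ : ℝ → ℝ} (hφ : ∀ t, 0 ≤ φ t) {t : ℝ} (ht : 0 < t) :
    0 ≤ ainfDensity α β p φ t := by
  have := hφ t
  have := ratioInf_nonneg (α := α) (β := β) t
  unfold ainfDensity
  positivity

lemma borderline_pos {y : ℝ} (hy : 0 < y) : 0 < borderline α β p y :=
  Real.rpow_pos_of_pos (mul_pos hy (Aw_pos hy.ne')) _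

lemma borderline_rpow_mul_Aw (hp : p ≠ 0) {y : ℝ} (hy : 0 < y) :
    borderline α β p y ^ p * Aw α β y = y⁻¹ := by
  have hA := Aw_pos (α := α) (β := β) hy.ne'
  rw [borderline, ← Real.rpow_mul (mul_pos hy hA).le, neg_mul, one_div_mul_cancel hp,
    Real.rpow_neg_one, mul_inv, mul_assoc, inv_mul_cancel₀ hA.ne', mul_one]

lemma borderline_div_mul_ratio {x t : ℝ} (hx : 0 < x) (ht : 0 < t) :
    borderline α β p (x / t) * (Aw α β (x / t) / Aw α β x)
      = t ^ (1/p) * borderline α β p x * (Aw α β (x / t) / Aw α β x) ^ (1 - 1/p) := by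
  have ha := Aw_pos (α := α) (β := β) (div_pos hx ht).ne'
  have hb := Aw_pos (α := α) (β := β) hx.ne'
  simp only [borderline]
  rw [Real.mul_rpow (div_pos hx ht).le ha.le, Real.div_rpow hx.le ht.le,
    Real.mul_rpow hx.le hb.le, Real.div_rpow ha.le hb.le, Real.rpow_sub ha, Real.rpow_sub hb,
    Real.rpow_one, Real.rpow_one, Real.rpow_neg ht.le, Real.rpow_neg ha.le, Real.rpow_neg hb.le]
  have := Real.rpow_pos_of_pos ha (1/p)
  have := Real.rpow_pos_of_pos hb (1/p)
  have := Real.rpow_pos_of_pos ht (1/p)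
  field_simp

lemma continuousAt_borderline {y : ℝ} (hy : 0 < y) : ContinuousAt (borderline α β p) y :=
  (continuousAt_id.mul (continuousAt_Aw hy.ne')).rpow_const
    (Or.inl (mul_pos hy (Aw_pos hy.ne')).ne')

lemma measurable_borderline : Measurable (borderline α β p) := by
  unfold borderline
  have := measurable_Aw (α := α) (β := β)
  fun_prop

end Profile

section TestFunction

variable {α β p M : ℝ}

lemma lintegral_indicator_borderline (hp : 0 < p) (hM : 1 ≤ M) :
    ∫⁻ x, ENNReal.ofReal (|(Icc 1 M).indicator (borderline α β p) x| ^ p * Aw α β x)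
      = ENNReal.ofReal (Real.log M) := by
  have hpt : ∀ x, ENNReal.ofReal (|(Icc 1 M).indicator (borderline α β p) x| ^ p * Aw α β x)
      = (Icc 1 M).indicator (fun x => ENNReal.ofReal x⁻¹) x := by
    intro x
    by_cases hx : x ∈ Icc 1 M
    · have hx0 : 0 < x := one_pos.trans_le hx.1
      simp only [indicator_of_mem hx, abs_of_pos (borderline_pos hx0),
        borderline_rpow_mul_Aw hp.ne' hx0]
    · simp [indicator_of_notMem hx, Real.zero_rpow hp.ne']
  rw [lintegral_congr hpt, lintegral_indicator measurableSet_Icc,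
    lintegral_Icc_ofReal_inv one_pos hM, div_one]

lemma lpN_indicator_borderline (hp : 0 < p) (hM : 1 ≤ M) :
    lpN α β p univ ((Icc 1 M).indicator (borderline α β p))
      = ENNReal.ofReal (Real.log M) ^ (1 / p) := by
  rw [lpN, Measure.restrict_univ, lintegral_indicator_borderline hp hM]

lemma exists_bound_mul_indicator_borderline_mul_Aw :
    ∃ B, ∀ y, |y * (Icc 1 M).indicator (borderline α β p) y * Aw α β y| ≤ B := by
  obtain ⟨B, hB⟩ := isCompact_Icc.exists_bound_of_continuousOn (f := fun y =>
      y * borderline α β p y * Aw α β y) fun y hy =>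
    have hy0 : 0 < y := one_pos.trans_le hy.1
    ((continuousAt_id.mul (continuousAt_borderline hy0)).mul
      (continuousAt_Aw hy0.ne')).continuousWithinAt
  refine ⟨max B 0, fun y => ?_⟩
  by_cases hy : y ∈ Icc 1 M
  · rw [indicator_of_mem hy]
    exact (hB y hy).trans (le_max_left _ _)
  · simp [indicator_of_notMem hy]

end TestFunction

section Integrand

variable {α β : ℝ} {φ : ℝ → ℝ}

lemma integrableOn_hausdorff_integrand (hφ : IntegrableOn φ (Ioi 0)) {f : ℝ → ℝ}
    (hf : Measurable f) {B : ℝ} (hB : ∀ y, |y * f y * Aw α β y| ≤ B) {x : ℝ} (hx : x ≠ 0) :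
    IntegrableOn (fun t => φ t / t * f (x / t) * (Aw α β (x / t) / Aw α β x)) (Ioi 0) := by
  refine Integrable.mono' (hφ.norm.mul_const (B / |x * Aw α β x|)) ?_
    ((ae_restrict_iff' measurableSet_Ioi).2 (Filter.Eventually.of_forall fun t ht => ?_))
  · have := measurable_Aw (α := α) (β := β)
    have := hφ.aestronglyMeasurable.aemeasurable
    exact (by fun_prop : AEMeasurable
      (fun t => φ t / t * f (x / t) * (Aw α β (x / t) / Aw α β x)) _).aestronglyMeasurable
  · have ht0 : (t : ℝ) ≠ 0 := (ne_of_gt ht)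
    have hxA : x * Aw α β x ≠ 0 := mul_ne_zero hx (Aw_pos hx).ne'
    have hrw : φ t / t * f (x / t) * (Aw α β (x / t) / Aw α β x)
        = φ t * (x / t * f (x / t) * Aw α β (x / t)) / (x * Aw α β x) := by
      field_simp
    rw [hrw, Real.norm_eq_abs, abs_div, abs_mul, ← Real.norm_eq_abs (φ t), mul_div_assoc]
    exact mul_le_mul_of_nonneg_left (div_le_div_of_nonneg_right (hB _) (abs_nonneg _))
      (norm_nonneg _)

end Integrand

section LowerBound

variable {α β p δ R M x : ℝ} {φ : ℝ → ℝ}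

lemma div_mem_Icc_one {t : ℝ} (hδ : 0 < δ) (hM : 0 ≤ M) (ht : t ∈ Ioc δ R)
    (hx : x ∈ Icc R (M * δ)) : x / t ∈ Icc 1 M := by
  have ht0 : 0 < t := hδ.trans ht.1
  refine ⟨(one_le_div ht0).2 (ht.2.trans hx.1), (div_le_iff₀ ht0).2 ?_⟩
  exact hx.2.trans (mul_le_mul_of_nonneg_left ht.1.le hM)

lemma ainfDensity_mul_borderline_le (hp : 1 < p) (hφ : ∀ t, 0 ≤ φ t) (hδ : 0 < δ)
    (hM : 0 ≤ M) {t : ℝ} (ht : t ∈ Ioc δ R) (hx : x ∈ Icc R (M * δ)) :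
    ainfDensity α β p φ t * borderline α β p x
      ≤ φ t / t * (Icc 1 M).indicator (borderline α β p) (x / t)
          * (Aw α β (x / t) / Aw α β x) := by
  have ht0 : 0 < t := hδ.trans ht.1
  have hx0 : 0 < x := ht0.trans_le (ht.2.trans hx.1)
  have hratio : ratioInf α β t ≤ Aw α β (x / t) / Aw α β x := by
    simpa [mul_div_cancel₀ x ht0.ne'] using ratioInf_le (α := α) (β := β) t
      (div_pos hx0 ht0).ne'
  have hexp : 0 ≤ 1 - 1/p := by
    rw [sub_nonneg, div_le_one (by linarith)]; exact hp.le
  have := hφ t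
  rw [indicator_of_mem (div_mem_Icc_one hδ hM ht hx), mul_assoc _ (borderline α β p _),
    borderline_div_mul_ratio hx0 ht0, ainfDensity]
  calc φ t / t * t ^ (1/p) * ratioInf α β t ^ (1 - 1/p) * borderline α β p x
      = φ t / t * (t ^ (1/p) * borderline α β p x * ratioInf α β t ^ (1 - 1/p)) := by ring
    _ ≤ _ := by
      have := borderline_pos (α := α) (β := β) (p := p) hx0
      gcongr
      exact ratioInf_nonneg t

lemma setLIntegral_ainfDensity_mul_le_ofReal_Hop (hp : 1 < p) (hφ : ∀ t, 0 ≤ φ t)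
    (hφint : IntegrableOn φ (Ioi 0)) (hδ : 0 < δ) (hR : 0 < R) (hM : 0 ≤ M)
    (hx : x ∈ Icc R (M * δ)) :
    (∫⁻ t in Ioc δ R, ENNReal.ofReal (ainfDensity α β p φ t))
        * ENNReal.ofReal (borderline α β p x)
      ≤ ENNReal.ofReal (Hop α β φ ((Icc 1 M).indicator (borderline α β p)) x) := by
  set h := fun t => φ t / t * (Icc 1 M).indicator (borderline α β p) (x / t)
    * (Aw α β (x / t) / Aw α β x)
  have hx0 : 0 < x := hR.trans_le hx.1
  obtain ⟨B, hB⟩ := exists_bound_mul_indicator_borderline_mul_Aw (α := α) (β := β) (p := p)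
    (M := M)
  have hint : IntegrableOn h (Ioi 0) := integrableOn_hausdorff_integrand hφint
    (measurable_borderline.indicator measurableSet_Icc) hB hx0.ne'
  have hnn : 0 ≤ᵐ[volume.restrict (Ioi 0)] h := by
    refine (ae_restrict_iff' measurableSet_Ioi).2 (Filter.Eventually.of_forall fun t ht => ?_)
    have := hφ t
    have := (Aw_nonneg (α := α) (β := β) (x / t))
    have : 0 ≤ (Icc 1 M).indicator (borderline α β p) (x / t) :=
      indicator_nonneg (fun y hy => (borderline_pos (one_pos.trans_le hy.1)).le) _
    have : (0 : ℝ) < t := ht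
    have := Aw_nonneg (α := α) (β := β) x
    positivity
  calc (∫⁻ t in Ioc δ R, ENNReal.ofReal (ainfDensity α β p φ t))
        * ENNReal.ofReal (borderline α β p x)
      = ∫⁻ t in Ioc δ R, ENNReal.ofReal (ainfDensity α β p φ t * borderline α β p x) := by
        rw [← lintegral_mul_const' _ _ ENNReal.ofReal_ne_top]
        refine setLIntegral_congr_fun measurableSet_Ioc fun t ht => ?_
        rw [ENNReal.ofReal_mul (ainfDensity_nonneg hφ (hδ.trans ht.1))]
    _ ≤ ∫⁻ t in Ioc δ R, ENNReal.ofReal (h t) := setLIntegral_mono' measurableSet_Ioc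
        fun t ht => ENNReal.ofReal_le_ofReal (ainfDensity_mul_borderline_le hp hφ hδ hM ht hx)
    _ ≤ ∫⁻ t in Ioi 0, ENNReal.ofReal (h t) :=
        lintegral_mono_set (Ioc_subset_Ioi_self.trans (Ioi_subset_Ioi hδ.le))
    _ = ENNReal.ofReal (Hop α β φ ((Icc 1 M).indicator (borderline α β p)) x) :=
        (ofReal_integral_eq_lintegral_ofReal hint hnn).symm

end LowerBound

section Necessity

variable {α β p δ R M : ℝ} {φ : ℝ → ℝ}

lemma setLIntegral_ainfDensity_rpow_mul_log_le_lpN_Hop_rpow (hp : 1 < p) (hφ : ∀ t, 0 ≤ φ t)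
    (hφint : IntegrableOn φ (Ioi 0)) (hδ : 0 < δ) (hR : 0 < R) (hM : 0 ≤ M)
    (hRM : R ≤ M * δ) :
    (∫⁻ t in Ioc δ R, ENNReal.ofReal (ainfDensity α β p φ t)) ^ p
        * ENNReal.ofReal (Real.log (M * δ / R))
      ≤ lpN α β p univ (Hop α β φ ((Icc 1 M).indicator (borderline α β p))) ^ p := by
  set J := ∫⁻ t in Ioc δ R, ENNReal.ofReal (ainfDensity α β p φ t)
  set H := Hop α β φ ((Icc 1 M).indicator (borderline α β p))
  have hp0 : 0 < p := by linarith
  have hpt : ∀ x ∈ Icc R (M * δ),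
      J ^ p * ENNReal.ofReal x⁻¹ ≤ ENNReal.ofReal (|H x| ^ p * Aw α β x) := by
    intro x hx
    have hx0 : 0 < x := hR.trans_le hx.1
    have hHx := setLIntegral_ainfDensity_mul_le_ofReal_Hop (α := α) (β := β) hp hφ hφint hδ
      hR hM hx
    calc J ^ p * ENNReal.ofReal x⁻¹
        = (J * ENNReal.ofReal (borderline α β p x)) ^ p * ENNReal.ofReal (Aw α β x) := by
          rw [← borderline_rpow_mul_Aw hp0.ne' hx0, ENNReal.mul_rpow_of_nonneg _ _ hp0.le,
            ENNReal.ofReal_mul (Real.rpow_nonneg (borderline_pos hx0).le _),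
            ENNReal.ofReal_rpow_of_nonneg (borderline_pos hx0).le hp0.le, mul_assoc]
      _ ≤ ENNReal.ofReal |H x| ^ p * ENNReal.ofReal (Aw α β x) := by
          gcongr
          exact hHx.trans (ENNReal.ofReal_le_ofReal (le_abs_self _))
      _ = ENNReal.ofReal (|H x| ^ p * Aw α β x) := by
          rw [ENNReal.ofReal_mul (Real.rpow_nonneg (abs_nonneg _) _),
            ENNReal.ofReal_rpow_of_nonneg (abs_nonneg _) hp0.le]
  calc J ^ p * ENNReal.ofReal (Real.log (M * δ / R))
      = ∫⁻ x in Icc R (M * δ), J ^ p * ENNReal.ofReal x⁻¹ := by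
        rw [lintegral_const_mul _ (by fun_prop), lintegral_Icc_ofReal_inv hR hRM]
    _ ≤ ∫⁻ x in Icc R (M * δ), ENNReal.ofReal (|H x| ^ p * Aw α β x) :=
        setLIntegral_mono' measurableSet_Icc hpt
    _ ≤ ∫⁻ x, ENNReal.ofReal (|H x| ^ p * Aw α β x) := setLIntegral_le_lintegral _ _
    _ = lpN α β p univ H ^ p := by rw [lpN_rpow hp0.ne', Measure.restrict_univ]

lemma lpN_Hop_indicator_borderline_rpow_le (hp : 0 < p) (hM : 1 ≤ M) {N : ℝ}
    (hbdd : ∀ f : ℝ → ℝ, Measurable f → lpN α β p univ f < ⊤ →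
      lpN α β p univ (Hop α β φ f) ≤ ENNReal.ofReal N * lpN α β p univ f) :
    lpN α β p univ (Hop α β φ ((Icc 1 M).indicator (borderline α β p))) ^ p
      ≤ ENNReal.ofReal N ^ p * ENNReal.ofReal (Real.log M) := by
  have hf := lpN_indicator_borderline (α := α) (β := β) hp hM
  have hfin : lpN α β p univ ((Icc 1 M).indicator (borderline α β p)) < ⊤ := by
    rw [hf]
    exact ENNReal.rpow_lt_top_of_nonneg (by positivity) ENNReal.ofReal_ne_top
  calc _ ≤ (ENNReal.ofReal N * lpN α β p univ ((Icc 1 M).indicator (borderline α β p))) ^ p :=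
        ENNReal.rpow_le_rpow
          (hbdd _ (measurable_borderline.indicator measurableSet_Icc) hfin) hp.le
    _ = ENNReal.ofReal N ^ p * ENNReal.ofReal (Real.log M) := by
        rw [ENNReal.mul_rpow_of_nonneg _ _ hp.le, lpN_rpow hp.ne', Measure.restrict_univ,
          lintegral_indicator_borderline hp hM]

lemma setLIntegral_Ioc_ainfDensity_le (hp : 1 < p) (hφ : ∀ t, 0 ≤ φ t)
    (hφint : IntegrableOn φ (Ioi 0)) {N : ℝ}
    (hbdd : ∀ f : ℝ → ℝ, Measurable f → lpN α β p univ f < ⊤ →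
      lpN α β p univ (Hop α β φ f) ≤ ENNReal.ofReal N * lpN α β p univ f)
    (hδ : 0 < δ) (hδR : δ ≤ R) :
    ∫⁻ t in Ioc δ R, ENNReal.ofReal (ainfDensity α β p φ t) ≤ ENNReal.ofReal N := by
  have hp0 : 0 < p := by linarith
  have hR : 0 < R := hδ.trans_le hδR
  have hc : 0 ≤ Real.log (R / δ) := Real.log_nonneg ((one_le_div hδ).2 hδR)
  refine (ENNReal.rpow_le_rpow_iff hp0).1 (ENNReal.le_of_forall_mul_ofReal_sub_le
    (ENNReal.rpow_ne_top_of_nonneg hp0.le ENNReal.ofReal_ne_top) hc fun L hL => ?_)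
  have hRM : R ≤ Real.exp L * δ := by
    rw [← div_le_iff₀ hδ, ← Real.log_le_iff_le_exp (div_pos hR hδ)]; exact hL.le
  have hM : 1 ≤ Real.exp L := Real.one_le_exp (hc.trans hL.le)
  have hlog : Real.log (Real.exp L * δ / R) = L - Real.log (R / δ) := by
    rw [mul_div_assoc, Real.log_mul (Real.exp_pos L).ne' (div_pos hδ hR).ne', Real.log_exp,
      ← inv_div, Real.log_inv, sub_eq_add_neg]
  have := (setLIntegral_ainfDensity_rpow_mul_log_le_lpN_Hop_rpow (α := α) (β := β) hp hφ
    hφint hδ hR (zero_le_one.trans hM) hRM).trans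
    (lpN_Hop_indicator_borderline_rpow_le hp0 hM hbdd)
  rwa [hlog, Real.log_exp] at this

end Necessity

theorem hausdorff_Lp_necessary_general (α β : ℝ)
    (p : ℝ) (hp : 1 < p)
    (φ : ℝ → ℝ) (hφpos : ∀ t, 0 ≤ φ t) (hφint : IntegrableOn φ (Set.Ioi 0))
    (Ainf : ℝ≥0∞)
    (hA : Ainf = ∫⁻ t in Set.Ioi (0 : ℝ), ENNReal.ofReal
      ((φ t / t) * t ^ (1/p) *
        (⨅ u : {u : ℝ // u ≠ 0}, Aw α β u.1 / Aw α β (t * u.1)) ^ (1 - 1/p)))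
    (N : ℝ)
    (hbdd : ∀ f : ℝ → ℝ, Measurable f → lpN α β p Set.univ f < ⊤ →
      lpN α β p Set.univ (Hop α β φ f) ≤ ENNReal.ofReal N * lpN α β p Set.univ f) :
    Ainf ≤ ENNReal.ofReal N := by
  rw [hA]
  exact setLIntegral_Ioi_le_of_forall_Ioc fun δ R hδ hδR =>
    setLIntegral_Ioc_ainfDensity_le hp hφpos hφint hbdd hδ hδR

/-- Necessary condition for `L^p`-boundedness of the Hausdorff operator. -/
theorem hausdorff_Lp_necessary (α β : ℝ) (hβα : β ≤ α) (hβ : -(1/2 : ℝ) ≤ β)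
    (hα : -(1/2 : ℝ) < α)
    (p : ℝ) (hp : 1 < p)
    (φ : ℝ → ℝ) (hφpos : ∀ t, 0 ≤ φ t) (hφint : IntegrableOn φ (Set.Ioi 0))
    (Ainf : ℝ≥0∞)
    (hA : Ainf = ∫⁻ t in Set.Ioi (0 : ℝ), ENNReal.ofReal
      ((φ t / t) * t ^ (1/p) *
        (⨅ u : {u : ℝ // u ≠ 0}, Aw α β u.1 / Aw α β (t * u.1)) ^ (1 - 1/p)))
    (hApos : 0 < Ainf)
    (N : ℝ) (hN : 0 ≤ N)
    (hbdd : ∀ f : ℝ → ℝ, Measurable f → lpN α β p Set.univ f < ⊤ →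
      lpN α β p Set.univ (Hop α β φ f) ≤ ENNReal.ofReal N * lpN α β p Set.univ f) :
    Ainf ≤ ENNReal.ofReal N :=
  hausdorff_Lp_necessary_general α β p hp φ hφpos hφint Ainf hA N hbdd
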